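/- arXiv:2010.06662 — 2 statements merged into one kernel-verified Lean document; each statement's English description precedes it below -/
import Mathlib

section
/- Let M, D, L be n-by-n real symmetric positive definite matrices. Then for every nonzero real β, the 2n-by-2n real matrix H(β) = [[βD, L - β²M], [L - β²M, -βD]] is nonsingular. -/
/-!
Since `βD` is invertible, `det H(β)` is `det(βD)` times the determinant of the Schur complement
`-βD - S (βD)⁻¹ S = -β⁻¹ (β² D + S D⁻¹ S)`, where `S = L - β² M` is symmetric. Then `S D⁻¹ S`
is positive semidefinite, so `β² D + S D⁻¹ S` is positive definite and hence invertible.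
-/

open Matrix
open scoped ComplexOrder

variable {m 𝕜 : Type*} [Fintype m] [DecidableEq m] [RCLike 𝕜]

theorem Matrix.isUnit_real_smul_iff {β : ℝ} (hβ : β ≠ 0) {A : Matrix m m 𝕜} :
    IsUnit (β • A) ↔ IsUnit A := by
  simpa using isUnit_smul_iff (Units.mk0 β hβ) A

theorem Matrix.PosDef.smul_add_mul_inv_mul {D S : Matrix m m 𝕜} (hD : D.PosDef)
    (hS : S.IsHermitian) {c : ℝ} (hc : 0 < c) : (c • D + S * D⁻¹ * S).PosDef := by
  refine (hD.smul hc).add_posSemidef ?_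
  simpa [hS.eq] using hD.inv.posSemidef.conjTranspose_mul_mul_same S

theorem Matrix.isUnit_det_fromBlocks_smul_neg_smul {D S : Matrix m m 𝕜} (hD : D.PosDef)
    (hS : S.IsHermitian) {β : ℝ} (hβ : β ≠ 0) :
    IsUnit (fromBlocks (β • D) S S (-(β • D))).det := by
  have hβD : IsUnit (β • D) := (isUnit_real_smul_iff hβ).mpr hD.isUnit
  let := hβD.invertible
  have schur : -(β • D) - S * ⅟(β • D) * S = -(β⁻¹ • (β ^ 2 • D + S * D⁻¹ * S)) := by
    have hinv : ⅟(β • D) = β⁻¹ • D⁻¹ := invOf_eq_left_inv <| by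
      rw [smul_mul_smul_comm, inv_mul_cancel₀ hβ, one_smul,
        nonsing_inv_mul _ ((isUnit_iff_isUnit_det D).mp hD.isUnit)]
    rw [hinv, Matrix.mul_smul, Matrix.smul_mul]
    match_scalars <;> field_simp
  have hP := hD.smul_add_mul_inv_mul hS (sq_pos_of_ne_zero hβ)
  rw [det_fromBlocks₁₁, schur]
  exact (hβD.map detMonoidHom).mul
    (((isUnit_real_smul_iff (inv_ne_zero hβ)).mpr hP.isUnit).neg.map detMonoidHom)

theorem stmt_5 {n : ℕ} (M D L : Matrix (Fin n) (Fin n) ℝ)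
    (hM : M.PosDef) (hD : D.PosDef) (hL : L.PosDef)
    (β : ℝ) (hβ : β ≠ 0) :
    IsUnit (Matrix.fromBlocks (β • D) (L - β ^ 2 • M) (L - β ^ 2 • M) (-(β • D))).det :=
  isUnit_det_fromBlocks_smul_neg_smul hD
    (hL.isHermitian.sub ((IsSelfAdjoint.all (β ^ 2)).smul hM.isHermitian)) hβ
end

section
/- Consider a 2-generator system: let L = [[a₁₂, -a₁₂], [-a₂₁, a₂₁]] with a₁₂ > 0, a₂₁ > 0, M = diag(m₁, m₂) with m₁, m₂ > 0, and D = diag(0, d₂) with d₂ > 0. Then for every nonzero real β, the complex matrix L - β²M - iβD is nonsingular; consequently J = [[0, I], [-M⁻¹L, -M⁻¹D]] has no purely imaginary eigenvalue. -/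
open Matrix

lemma stmt_18_key (p q r c : ℝ) (hr : r ≠ 0) (hc : c ≠ 0) :
    (p : ℂ) * ((q : ℂ) + (r : ℂ) * Complex.I) - (c : ℂ) ≠ 0 := by
  intro h
  have him : p * r = 0 := by
    have := congrArg Complex.im h
    simpa using this
  have hp : p = 0 := by
    rcases mul_eq_zero.mp him with h' | h'
    · exact h'
    · exact absurd h' hr
  have hre := congrArg Complex.re h
  simp [hp] at hre
  exact hc hre

theorem stmt_18 (a₁₂ a₂₁ m₁ m₂ d₂ : ℝ)
    (ha₁₂ : 0 < a₁₂) (ha₂₁ : 0 < a₂₁) (hm₁ : 0 < m₁) (hm₂ : 0 < m₂) (hd₂ : 0 < d₂)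
    (L M D : Matrix (Fin 2) (Fin 2) ℝ)
    (hL : L = !![a₁₂, -a₁₂; -a₂₁, a₂₁])
    (hM : M = Matrix.diagonal ![m₁, m₂])
    (hD : D = Matrix.diagonal ![0, d₂])
    (J : Matrix (Fin 2 ⊕ Fin 2) (Fin 2 ⊕ Fin 2) ℝ)
    (hJ : J = Matrix.fromBlocks 0 1 (-(M⁻¹ * L)) (-(M⁻¹ * D))) :
    ∀ β : ℝ, β ≠ 0 →
      IsUnit (L.map (Complex.ofReal) - (β : ℂ) ^ 2 • M.map (Complex.ofReal)
        - (Complex.I * β) • D.map (Complex.ofReal)).det ∧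
      (∀ v : (Fin 2 ⊕ Fin 2) → ℂ,
        (J.map (Complex.ofReal)).mulVec v = (Complex.I * β) • v → v = 0) := by
  have hMinv : M⁻¹ = Matrix.diagonal ![m₁⁻¹, m₂⁻¹] := by
    rw [hM]
    apply Matrix.inv_eq_right_inv
    rw [Matrix.diagonal_mul_diagonal]
    ext i j
    fin_cases i <;> fin_cases j <;>
      simp [Matrix.diagonal_apply, Matrix.one_apply, hm₁.ne', hm₂.ne']
  have hc : a₁₂ * a₂₁ ≠ 0 := (mul_pos ha₁₂ ha₂₁).ne'
  intro β hβ
  constructor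
  · apply isUnit_iff_ne_zero.mpr
    subst hL hM hD
    rw [Matrix.det_fin_two]
    simp only [Matrix.sub_apply, Matrix.smul_apply, Matrix.map_apply, Matrix.cons_val',
      Matrix.cons_val_zero, Matrix.cons_val_one, Matrix.head_cons, Matrix.head_fin_const,
      Matrix.empty_val', Matrix.cons_val_fin_one, Matrix.diagonal_apply, smul_eq_mul,
      Matrix.of_apply]
    norm_num
    have h := stmt_18_key (a₁₂ - β^2*m₁) (a₂₁ - β^2*m₂) (-(β*d₂)) (a₁₂*a₂₁)
      (by intro h; apply hβ; simpa [hd₂.ne'] using h) hc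
    intro h2; apply h
    rw [← h2]; push_cast; ring
  · intro v hv
    rw [hJ, hMinv, hL, hD] at hv
    have h0 := congrFun hv (Sum.inl 0)
    have h1 := congrFun hv (Sum.inl 1)
    have h2 := congrFun hv (Sum.inr 0)
    have h3 := congrFun hv (Sum.inr 1)
    simp [Matrix.mulVec, Matrix.fromBlocks, dotProduct, Fin.sum_univ_two,
      Matrix.diagonal_apply, Matrix.mul_apply, Matrix.one_apply] at h0 h1 h2 h3
    set v0 := v (Sum.inl 0)
    set v1 := v (Sum.inl 1)
    -- turn h2, h3 into polynomial identities
    have hm₁' : (m₁ : ℂ) ≠ 0 := by exact_mod_cast hm₁.ne'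
    have hm₂' : (m₂ : ℂ) ≠ 0 := by exact_mod_cast hm₂.ne'
    have hA₁ : (m₁:ℂ) * (m₁:ℂ)⁻¹ = 1 := mul_inv_cancel₀ hm₁'
    have hA₂ : (m₂:ℂ) * (m₂:ℂ)⁻¹ = 1 := mul_inv_cancel₀ hm₂'
    have e1 : ((a₁₂ : ℂ) - (β:ℂ)^2 * m₁) * v0 = (a₁₂ : ℂ) * v1 := by
      rw [h0] at h2
      linear_combination (-(m₁:ℂ))*h2 + ((a₁₂:ℂ)*v1 - (a₁₂:ℂ)*v0)*hA₁
        - ((m₁:ℂ)*(β:ℂ)^2*v0)*Complex.I_sq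
    have e2 : (a₂₁ : ℂ) * v0 =
        (((a₂₁ : ℂ) - (β:ℂ)^2 * m₂) + (β:ℂ) * (d₂:ℂ) * Complex.I) * v1 := by
      rw [h1] at h3
      linear_combination (m₂:ℂ)*h3 + ((a₂₁:ℂ)*v1 - (a₂₁:ℂ)*v0
        + Complex.I*(β:ℂ)*(d₂:ℂ)*v1)*hA₂ + ((m₂:ℂ)*(β:ℂ)^2*v1)*Complex.I_sq
    have hDne := stmt_18_key (a₁₂ - β^2*m₁) (a₂₁ - β^2*m₂) (β*d₂) (a₁₂*a₂₁)
      (mul_ne_zero hβ hd₂.ne') hc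
    have hv1 : v1 = 0 := by
      have hmul : (((a₁₂ - β^2*m₁ : ℝ) : ℂ) * (((a₂₁ - β^2*m₂ : ℝ):ℂ) + ((β*d₂:ℝ):ℂ) * Complex.I)
          - ((a₁₂*a₂₁ : ℝ):ℂ)) * v1 = 0 := by
        push_cast
        linear_combination ((a₂₁:ℂ)) * e1 - ((a₁₂:ℂ) - (β:ℂ)^2 * (m₁:ℂ)) * e2
      rcases mul_eq_zero.mp hmul with h' | h'
      · exact absurd h' hDne
      · exact h'
    have hv0 : v0 = 0 := by
      have : (a₂₁ : ℂ) * v0 = 0 := by rw [e2, hv1, mul_zero]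
      rcases mul_eq_zero.mp this with h' | h'
      · exact absurd h' (by exact_mod_cast ha₂₁.ne')
      · exact h'
    funext i
    match i with
    | Sum.inl 0 => exact hv0
    | Sum.inl 1 => exact hv1
    | Sum.inr 0 => simp [h0, hv0]
    | Sum.inr 1 => simp [h1, hv1]
end
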